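/- arXiv:2406.06317 — 2 statements merged into one kernel-verified Lean document; each statement's English description precedes it below -/
import Mathlib

section
/- Let G be a connected graph. Two vertices u and v are adjacent in G if and only if for every search tree T on G, the vertices u and v lie on a common branch of T (equivalently, one is an ancestor of the other in T). -/
open scoped Classical

universe u

variable {V : Type u}

/-- A rooted tree structure on a support set: data only, well-formedness is `RTree.WF`. -/
structure RTree (V : Type u) where
  supp : Set V
  root : V
  parent : V → Option V

namespace RTree

def parentRel (T : RTree V) (a b : V) : Prop := T.parent a = some b

/-- `u` is an ancestor of `v` in `T` (reflexively). -/
def isAncestor (T : RTree V) (u v : V) : Prop :=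
  Relation.ReflTransGen T.parentRel v u

def WF (T : RTree V) : Prop :=
  T.root ∈ T.supp ∧
  T.parent T.root = none ∧
  (∀ v, v ∉ T.supp → T.parent v = none) ∧
  (∀ v ∈ T.supp, v ≠ T.root → ∃ u ∈ T.supp, T.parent v = some u) ∧
  (∀ v ∈ T.supp, T.isAncestor T.root v)

/-- The vertex set of the subtree `T|c` rooted at `c`. -/
def descendants (T : RTree V) (c : V) : Set V :=
  {v | v ∈ T.supp ∧ T.isAncestor c v}

/-- Iterated parent. -/
def pIter (T : RTree V) : ℕ → V → Option V
  | 0, w => some w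
  | n + 1, w => (T.parent w).bind (T.pIter n)

/-- The depth `d_{T,v}` of `v` in `T` (distance to the root). -/
noncomputable def depthOf (T : RTree V) (v : V) : ℕ :=
  sInf {n | T.pIter n v = some T.root}

/-- The subtree of `T` rooted at `c`. -/
noncomputable def subtreeAt (T : RTree V) (c : V) : RTree V where
  supp := T.descendants c
  root := c
  parent := fun w => if w = c then none else if w ∈ T.descendants c then T.parent w else none

/-- The vertex at depth `i` on the path from the root to `v`. -/
noncomputable def ancAt (T : RTree V) (v : V) (i : ℕ) : V :=
  (T.pIter (T.depthOf v - i) v).getD T.root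

/-- Insertion `T(i,x,v)` of a new vertex `x` at depth `i` along the root-to-`v` path:
`i = 0` makes `x` the new root, `i = d_{T,v}+1` adds `x` as a new child of `v`, and
for `1 ≤ i ≤ d_{T,v}` the `i`-th edge of the root-to-`v` path is subdivided by `x`. -/
noncomputable def insertAt (T : RTree V) (i : ℕ) (x v : V) : RTree V :=
  if i = 0 then
    { supp := insert x T.supp
      root := x
      parent := fun w => if w = x then none else if w = T.root then some x else T.parent w }
  else if i = T.depthOf v + 1 then
    { supp := insert x T.supp
      root := T.root
      parent := fun w => if w = x then some v else T.parent w }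
  else
    { supp := insert x T.supp
      root := T.root
      parent := fun w =>
        if w = x then some (T.ancAt v (i - 1))
        else if w = T.ancAt v i then some x
        else T.parent w }

/-- Elimination `p(T,x)` of a vertex `x` (meaningful when `x` has at most one child). -/
noncomputable def elim (T : RTree V) (x : V) : RTree V where
  supp := T.supp \ {x}
  root :=
    if T.root = x then (if h : ∃ w, T.parent w = some x then h.choose else T.root) else T.root
  parent := fun w =>
    if w = x then none
    else if T.parent w = some x then T.parent x
    else T.parent w

end RTree

/-- Reachability inside the vertex set `s`, i.e. in the induced subgraph `G[s]`. -/
def reachWithin (G : SimpleGraph V) (s : Set V) : V → V → Prop :=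
  Relation.ReflTransGen (fun a b => a ∈ s ∧ b ∈ s ∧ G.Adj a b)

/-- Recursive definition of a search tree: the children of the root are the roots of
search trees on the connected components of the graph minus the root. -/
inductive IsSearchTreeRec {V : Type u} (G : SimpleGraph V) : RTree V → Prop
  | intro (T : RTree V) (hwf : T.WF)
      (hconn : ∀ a ∈ T.supp, ∀ b ∈ T.supp, reachWithin G T.supp a b)
      (hcomp : ∀ c, T.parent c = some T.root →
        ∀ w, w ∈ T.descendants c ↔
          (w ∈ T.supp ∧ w ≠ T.root ∧ reachWithin G (T.supp \ {T.root}) c w))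
      (hrec : ∀ c, T.parent c = some T.root → IsSearchTreeRec G (T.subtreeAt c)) :
      IsSearchTreeRec G T

/-- `T` is a search tree on the induced subgraph `G[s]`. -/
def IsSearchTreeOn (G : SimpleGraph V) (s : Set V) (T : RTree V) : Prop :=
  T.supp = s ∧ IsSearchTreeRec G T

/-- `T` is a search tree on `G`. -/
def IsSearchTree (G : SimpleGraph V) (T : RTree V) : Prop :=
  IsSearchTreeOn G Set.univ T

/-- The `uv`-rotation of `T` (for `v` a child of `u`): `u` becomes a child of `v`, `v` takes
`u`'s old parent, and each subtree `S` of `v` is reattached below `u` iff `u` has a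
`G`-neighbour in `S`. -/
noncomputable def rotate (G : SimpleGraph V) (T : RTree V) (u v : V) : RTree V where
  supp := T.supp
  root := if T.root = u then v else T.root
  parent := fun w =>
    if w = v then T.parent u
    else if w = u then some v
    else if T.parent w = some v then
      (if ∃ z ∈ T.descendants w, G.Adj u z then some u else some v)
    else T.parent w

def IsRotation (G : SimpleGraph V) (S S' : RTree V) : Prop :=
  ∃ u v, S.parent v = some u ∧ S' = rotate G S u v

def rotAdj (G : SimpleGraph V) (S S' : RTree V) : Prop :=
  S ≠ S' ∧ (IsRotation G S S' ∨ IsRotation G S' S)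

/-- The rotation graph of the induced subgraph `G[s]`: vertices are the search trees on
`G[s]`, two trees being adjacent iff they differ by a single rotation. -/
def rotationGraphOn (G : SimpleGraph V) (s : Set V) :
    SimpleGraph {T : RTree V // IsSearchTreeOn G s T} where
  Adj T T' := rotAdj G T.1 T'.1
  symm := ⟨fun T T' h => ⟨Ne.symm h.1, Or.symm h.2⟩⟩
  loopless := ⟨fun T h => h.1 rfl⟩

/-- A vertex of `K` of maximal depth in `T` (the vertex `v_{λ(T)}`). -/
noncomputable def deepestIn (T : RTree V) (K : Set V) : V :=
  if h : ∃ u, u ∈ K ∧ ∀ w ∈ K, T.depthOf w ≤ T.depthOf u then h.choose else T.root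

/-- `u` and `v` have different relative order in `T` and `T'`. -/
def diffRelOrder (T T' : RTree V) (u v : V) : Prop :=
  (T.isAncestor u v ∧ ¬ T'.isAncestor u v) ∨ (¬ T.isAncestor u v ∧ T'.isAncestor u v)

/-- The step from `S` to `S'` is a rotation of the pair `u`, `v`. -/
def isUVStep (G : SimpleGraph V) (u v : V) (S S' : RTree V) : Prop :=
  (S.parent v = some u ∧ S' = rotate G S u v) ∨ (S.parent u = some v ∧ S' = rotate G S v u)

/-- A threshold graph: obtainable from the one-vertex graph by repeatedly adding either an
isolated vertex or a universal vertex. -/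
def IsThresholdGraph {V : Type u} [Fintype V] (G : SimpleGraph V) : Prop :=
  ∃ e : Fin (Fintype.card V) ≃ V,
    ∀ i : Fin (Fintype.card V),
      (∀ j, j < i → ¬ G.Adj (e i) (e j)) ∨ (∀ j, j < i → G.Adj (e i) (e j))

/-- The complete split graph `SPK_{p,q}`: a clique of size `p` completely joined to an
independent set of size `q`. -/
def completeSplitGraph (p q : ℕ) : SimpleGraph (Fin p ⊕ Fin q) where
  Adj a b := a ≠ b ∧ (a.isLeft = true ∨ b.isLeft = true)
  symm := ⟨fun a b h => ⟨Ne.symm h.1, Or.symm h.2⟩⟩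
  loopless := ⟨fun a h => h.1 rfl⟩

/-!
Adjacent vertices stay in a common component of the graph until one of them is chosen as a
root, so in every search tree one is an ancestor of the other. Conversely, for non-adjacent
`u ≠ v`, choose as root a neighbour `r` of `u`; it differs from `v`, and either removing `r`
separates `u` from `v`, or both lie in one smaller component, on which we recurse. A search tree
with a prescribed root `r` is obtained by hanging search trees of the components of `G[s] - r`
below `r`.
-/

section Components

variable {G : SimpleGraph V} {s : Set V}

def IsPreconnectedWithin (G : SimpleGraph V) (s : Set V) : Prop :=
  ∀ a ∈ s, ∀ b ∈ s, reachWithin G s a b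

/-- The connected component of `w` in `G[s]` (empty if `w ∉ s`). -/
def compWithin (G : SimpleGraph V) (s : Set V) (w : V) : Set V :=
  {z | z ∈ s ∧ reachWithin G s w z}

lemma reachWithin_symm {a b : V} (h : reachWithin G s a b) : reachWithin G s b a := by
  induction h with
  | refl => exact .refl
  | tail _ hbc ih => exact .head ⟨hbc.2.1, hbc.1, hbc.2.2.symm⟩ ih

lemma reachWithin_univ_of_reachable {a b : V} (h : G.Reachable a b) :
    reachWithin G Set.univ a b :=
  Relation.ReflTransGen.mono (fun _ _ hxy => ⟨trivial, trivial, hxy⟩) _ _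
    ((SimpleGraph.reachable_iff_reflTransGen a b).1 h)

lemma IsPreconnectedWithin.exists_adj (hs : IsPreconnectedWithin G s) {u v : V} (hu : u ∈ s)
    (hv : v ∈ s) (huv : u ≠ v) : ∃ r ∈ s, G.Adj u r := by
  obtain h | ⟨r, hur, -⟩ := (hs u hu v hv).cases_head
  · exact absurd h huv
  · exact ⟨r, hur.2.1, hur.2.2⟩

lemma mem_compWithin_self {w : V} (hw : w ∈ s) : w ∈ compWithin G s w := ⟨hw, .refl⟩

lemma compWithin_subset (w : V) : compWithin G s w ⊆ s := fun _ h => h.1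

lemma compWithin_eq_of_mem {w z : V} (hz : z ∈ compWithin G s w) :
    compWithin G s z = compWithin G s w := by
  ext y
  exact ⟨fun ⟨hy, h⟩ => ⟨hy, hz.2.trans h⟩,
    fun ⟨hy, h⟩ => ⟨hy, (reachWithin_symm hz.2).trans h⟩⟩

lemma reachWithin_compWithin {a b : V} (h : reachWithin G s a b) :
    reachWithin G (compWithin G s a) a b := by
  induction h with
  | refl => exact .refl
  | tail hac hcb ih => exact ih.tail ⟨⟨hcb.1, hac⟩, ⟨hcb.2.1, hac.tail hcb⟩, hcb.2.2⟩

lemma isPreconnectedWithin_compWithin (w : V) : IsPreconnectedWithin G (compWithin G s w) := by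
  intro a ha b hb
  rw [← compWithin_eq_of_mem ha]
  exact reachWithin_compWithin ((reachWithin_symm ha.2).trans hb.2)

lemma finite_compWithin (hfin : s.Finite) (w : V) : (compWithin G s w).Finite :=
  hfin.subset (compWithin_subset w)

lemma ncard_compWithin_lt {r : V} (hfin : s.Finite) (hr : r ∈ s) (w : V) :
    (compWithin G (s \ {r}) w).ncard < s.ncard :=
  Set.ncard_lt_ncard ((compWithin_subset w).trans_ssubset (Set.sdiff_singleton_ssubset.2 hr)) hfin

end Components

namespace RTree

lemma ext {T T' : RTree V} (hs : T.supp = T'.supp) (hr : T.root = T'.root)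
    (hp : T.parent = T'.parent) : T = T' := by
  cases T; cases T'; congr

instance [Nonempty V] : Nonempty (RTree V) := ⟨⟨∅, Classical.arbitrary V, fun _ => none⟩⟩

lemma WF.parent_eq_some {T : RTree V} (hT : T.WF) {x y : V} (h : T.parent x = some y) :
    x ∈ T.supp ∧ x ≠ T.root ∧ y ∈ T.supp := by
  obtain ⟨-, hroot, hout, hpar, -⟩ := hT
  have hx : x ∈ T.supp := by_contra fun hx => by simp [hout x hx] at h
  have hxr : x ≠ T.root := by rintro rfl; simp [hroot] at h
  obtain ⟨z, hz, hxz⟩ := hpar x hx hxr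
  exact ⟨hx, hxr, Option.some.inj (h.symm.trans hxz) ▸ hz⟩

lemma isAncestor_of_isAncestor_subtreeAt {T : RTree V} {c a b : V}
    (h : (T.subtreeAt c).isAncestor a b) : T.isAncestor a b := by
  refine Relation.ReflTransGen.mono (fun x y hxy => ?_) _ _ h
  simp only [parentRel, subtreeAt] at hxy
  split_ifs at hxy
  exact hxy

end RTree

lemma IsSearchTreeRec.wf {G : SimpleGraph V} {T : RTree V} (hT : IsSearchTreeRec G T) : T.WF := by
  cases hT; assumption

theorem IsSearchTreeRec.isAncestor_or_isAncestor_of_adj {G : SimpleGraph V} {T : RTree V}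
    (hT : IsSearchTreeRec G T) {u v : V} (hadj : G.Adj u v) (hu : u ∈ T.supp)
    (hv : v ∈ T.supp) :
    T.isAncestor u v ∨ T.isAncestor v u := by
  induction hT generalizing u v with
  | intro T hwf _ hcomp _ ih =>
    obtain ⟨-, -, -, -, hanc⟩ := hwf
    by_cases hur : u = T.root
    · exact .inl (hur ▸ hanc v hv)
    by_cases hvr : v = T.root
    · exact .inr (hvr ▸ hanc u hu)
    obtain ⟨c, hcu, hc⟩ := ((hanc u hu).cases_tail).resolve_left (Ne.symm hur)
    have hu' : u ∈ T.descendants c := ⟨hu, hcu⟩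
    -- the edge `uv` avoids the root, so `v` lies in the same component as `u`
    have hv' : v ∈ T.descendants c := (hcomp c hc v).2
      ⟨hv, hvr, ((hcomp c hc u).1 hu').2.2.tail ⟨⟨hu, hur⟩, ⟨hv, hvr⟩, hadj⟩⟩
    exact (ih c hc hadj hu' hv').imp RTree.isAncestor_of_isAncestor_subtreeAt
      RTree.isAncestor_of_isAncestor_subtreeAt

section Glue

variable {G : SimpleGraph V} {s : Set V} {r : V} {F : Set V → RTree V}

def IsSearchForestOn (G : SimpleGraph V) (s : Set V) (F : Set V → RTree V) : Prop :=
  ∀ w ∈ s, IsSearchTreeOn G (compWithin G s w) (F (compWithin G s w))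

lemma IsSearchForestOn.supp (hF : IsSearchForestOn G s F) {w : V} (hw : w ∈ s) :
    (F (compWithin G s w)).supp = compWithin G s w :=
  (hF w hw).1

lemma IsSearchForestOn.wf (hF : IsSearchForestOn G s F) {w : V} (hw : w ∈ s) :
    (F (compWithin G s w)).WF :=
  (hF w hw).2.wf

lemma IsSearchForestOn.parent_eq_some (hF : IsSearchForestOn G s F) {w x y : V} (hw : w ∈ s)
    (h : (F (compWithin G s w)).parent x = some y) :
    x ∈ compWithin G s w ∧ x ≠ (F (compWithin G s w)).root ∧ y ∈ compWithin G s w := by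
  have hxy := (hF.wf hw).parent_eq_some h
  rwa [hF.supp hw] at hxy

lemma exists_isSearchForestOn [Nonempty V] {P : Set V → RTree V → Prop}
    (h : ∀ w ∈ s, ∃ T, IsSearchTreeOn G (compWithin G s w) T ∧ P (compWithin G s w) T) :
    ∃ F, IsSearchForestOn G s F ∧ ∀ w ∈ s, P (compWithin G s w) (F (compWithin G s w)) :=
  ⟨fun C => Classical.epsilon fun T => IsSearchTreeOn G C T ∧ P C T,
    fun w hw => (Classical.epsilon_spec (h w hw)).1,
    fun w hw => (Classical.epsilon_spec (h w hw)).2⟩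

/-- The tree with root `r` whose subtrees are the trees `F C` on the components `C` of
`G[s] - r`. -/
noncomputable def glueTree (G : SimpleGraph V) (s : Set V) (r : V) (F : Set V → RTree V) :
    RTree V where
  supp := s
  root := r
  parent w :=
    if w ∈ s \ {r} then
      if w = (F (compWithin G (s \ {r}) w)).root then some r
      else (F (compWithin G (s \ {r}) w)).parent w
    else none

lemma glueTree_parent_of_ne_root {w : V} (hw : w ∈ s \ {r})
    (h : w ≠ (F (compWithin G (s \ {r}) w)).root) :
    (glueTree G s r F).parent w = (F (compWithin G (s \ {r}) w)).parent w := by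
  simp only [glueTree]
  rw [if_pos hw, if_neg h]

lemma glueTree_parent_eq_some_root_iff (hF : IsSearchForestOn G (s \ {r}) F) {x : V} :
    (glueTree G s r F).parent x = some r ↔
      x ∈ s \ {r} ∧ x = (F (compWithin G (s \ {r}) x)).root := by
  simp only [glueTree]
  split_ifs with hx hroot
  · exact iff_of_true rfl ⟨hx, hroot⟩
  · simp only [hroot, and_false, iff_false]
    exact fun h => (compWithin_subset _ (hF.parent_eq_some hx h).2.2).2 rfl
  · simp [hx]

lemma glueTree_parent_eq_some_iff (hF : IsSearchForestOn G (s \ {r}) F) {x y : V} (hy : y ≠ r) :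
    (glueTree G s r F).parent x = some y ↔
      x ∈ s \ {r} ∧ (F (compWithin G (s \ {r}) x)).parent x = some y := by
  simp only [glueTree]
  split_ifs with hx hroot
  · have hnone := (hF.wf hx).2.1
    rw [← hroot] at hnone
    simp [hnone, hy.symm]
  · simp [hx]
  · simp [hx]

lemma glueTree_parent_eq_some_of_parent (hF : IsSearchForestOn G (s \ {r}) F) {w x y : V}
    (hw : w ∈ s \ {r}) (h : (F (compWithin G (s \ {r}) w)).parent x = some y) :
    (glueTree G s r F).parent x = some y := by
  obtain ⟨hx, -, hy⟩ := hF.parent_eq_some hw h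
  rw [glueTree_parent_eq_some_iff hF (compWithin_subset _ hy).2, compWithin_eq_of_mem hx]
  exact ⟨compWithin_subset _ hx, h⟩

lemma glueTree_isAncestor_of_isAncestor (hF : IsSearchForestOn G (s \ {r}) F) {w a b : V}
    (hw : w ∈ s \ {r}) (h : (F (compWithin G (s \ {r}) w)).isAncestor a b) :
    (glueTree G s r F).isAncestor a b :=
  Relation.ReflTransGen.mono (fun _ _ => glueTree_parent_eq_some_of_parent hF hw) _ _ h

lemma glueTree_isAncestor_root (hF : IsSearchForestOn G (s \ {r}) F) {w : V} (hw : w ∈ s) :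
    (glueTree G s r F).isAncestor r w := by
  by_cases hwr : w = r
  · exact hwr ▸ .refl
  have hw' : w ∈ s \ {r} := ⟨hw, hwr⟩
  have hroot := (hF.wf hw').1
  rw [hF.supp hw'] at hroot
  refine .tail (glueTree_isAncestor_of_isAncestor hF hw' ((hF.wf hw').2.2.2.2 w ?_)) ?_
  · rw [hF.supp hw']
    exact mem_compWithin_self hw'
  · rw [RTree.parentRel, glueTree_parent_eq_some_root_iff hF, compWithin_eq_of_mem hroot]
    exact ⟨compWithin_subset _ hroot, rfl⟩

lemma isAncestor_of_glueTree_isAncestor (hF : IsSearchForestOn G (s \ {r}) F) {c a : V}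
    (hc : c ∈ s \ {r}) (h : (glueTree G s r F).isAncestor c a) :
    a ∈ compWithin G (s \ {r}) c ∧ (F (compWithin G (s \ {r}) c)).isAncestor c a := by
  induction h using Relation.ReflTransGen.head_induction_on with
  | refl => exact ⟨mem_compWithin_self hc, .refl⟩
  | head hstep _ ih =>
    obtain ⟨ha'c, hchain⟩ := ih
    rw [RTree.parentRel, glueTree_parent_eq_some_iff hF (compWithin_subset _ ha'c).2] at hstep
    obtain ⟨ha, hpar⟩ := hstep
    have hac : compWithin G (s \ {r}) _ = compWithin G (s \ {r}) c :=
      (compWithin_eq_of_mem (hF.parent_eq_some ha hpar).2.2).symm.trans (compWithin_eq_of_mem ha'c)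
    rw [hac] at hpar
    exact ⟨hac ▸ mem_compWithin_self ha, .head hpar hchain⟩

lemma glueTree_descendants (hF : IsSearchForestOn G (s \ {r}) F) {c : V} (hc : c ∈ s \ {r})
    (hroot : c = (F (compWithin G (s \ {r}) c)).root) :
    (glueTree G s r F).descendants c = compWithin G (s \ {r}) c := by
  ext a
  refine ⟨fun ha => (isAncestor_of_glueTree_isAncestor hF hc ha.2).1,
    fun ha => ⟨(compWithin_subset _ ha).1, ?_⟩⟩
  have hanc := (hF.wf hc).2.2.2.2 a (by rwa [hF.supp hc])
  rw [← hroot] at hanc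
  exact glueTree_isAncestor_of_isAncestor hF hc hanc

lemma glueTree_subtreeAt (hF : IsSearchForestOn G (s \ {r}) F) {c : V} (hc : c ∈ s \ {r})
    (hroot : c = (F (compWithin G (s \ {r}) c)).root) :
    (glueTree G s r F).subtreeAt c = F (compWithin G (s \ {r}) c) := by
  have hwf := hF.wf hc
  refine RTree.ext ((glueTree_descendants hF hc hroot).trans (hF.supp hc).symm) hroot
    (funext fun w => ?_)
  simp only [RTree.subtreeAt, glueTree_descendants hF hc hroot]
  split_ifs with hwc hw
  · subst hwc
    have hnone := hwf.2.1
    rw [← hroot] at hnone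
    exact hnone.symm
  · have hcw := compWithin_eq_of_mem hw
    rw [glueTree_parent_of_ne_root (compWithin_subset _ hw) (by rwa [hcw, ← hroot]), hcw]
  · exact (hwf.2.2.1 w (by rwa [hF.supp hc])).symm

lemma glueTree_wf (hF : IsSearchForestOn G (s \ {r}) F) (hr : r ∈ s) : (glueTree G s r F).WF := by
  refine ⟨hr, by simp [glueTree], fun w hw => if_neg fun h => hw h.1, fun w hw hwr => ?_,
    fun w hw => glueTree_isAncestor_root hF hw⟩
  have hw' : w ∈ s \ {r} := ⟨hw, hwr⟩
  by_cases hroot : w = (F (compWithin G (s \ {r}) w)).root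
  · exact ⟨r, hr, (glueTree_parent_eq_some_root_iff hF).2 ⟨hw', hroot⟩⟩
  · obtain ⟨p, hp, hwp⟩ :=
      (hF.wf hw').2.2.2.1 w (by rw [hF.supp hw']; exact mem_compWithin_self hw') hroot
    rw [hF.supp hw'] at hp
    exact ⟨p, (compWithin_subset _ hp).1, glueTree_parent_eq_some_of_parent hF hw' hwp⟩

theorem isSearchTreeOn_glueTree (hF : IsSearchForestOn G (s \ {r}) F) (hr : r ∈ s)
    (hs : IsPreconnectedWithin G s) : IsSearchTreeOn G s (glueTree G s r F) := by
  refine ⟨rfl, .intro _ (glueTree_wf hF hr) hs (fun c hc w => ?_) (fun c hc => ?_)⟩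
  all_goals obtain ⟨hc', hroot⟩ := (glueTree_parent_eq_some_root_iff hF).1 hc
  · rw [glueTree_descendants hF hc' hroot]
    exact and_assoc
  · rw [glueTree_subtreeAt hF hc' hroot]
    exact (hF c hc').2

end Glue

section Existence

variable {G : SimpleGraph V}

theorem exists_isSearchTreeOn {s : Set V} (hfin : s.Finite) (hs : IsPreconnectedWithin G s)
    (hne : s.Nonempty) : ∃ T, IsSearchTreeOn G s T := by
  induction hn : s.ncard using Nat.strong_induction_on generalizing s with
  | _ n ih =>
  obtain ⟨r, hr⟩ := hne
  have : Nonempty V := ⟨r⟩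
  obtain ⟨F, hF, -⟩ := exists_isSearchForestOn (P := fun _ _ => True) fun w hw =>
    (ih _ (hn ▸ ncard_compWithin_lt hfin hr w) (finite_compWithin hfin.sdiff w)
      (isPreconnectedWithin_compWithin w) ⟨w, mem_compWithin_self hw⟩ rfl).imp
      fun _ hT => ⟨hT, trivial⟩
  exact ⟨_, isSearchTreeOn_glueTree hF hr hs⟩

theorem exists_isSearchTreeOn_not_comparable {s : Set V} (hfin : s.Finite)
    (hs : IsPreconnectedWithin G s) {u v : V} (hu : u ∈ s) (hv : v ∈ s) (huv : u ≠ v)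
    (hadj : ¬ G.Adj u v) :
    ∃ T, IsSearchTreeOn G s T ∧ ¬ (T.isAncestor u v ∨ T.isAncestor v u) := by
  induction hn : s.ncard using Nat.strong_induction_on generalizing s with
  | _ n ih =>
  obtain ⟨r, hr, hur⟩ := hs.exists_adj hu hv huv
  have hu' : u ∈ s \ {r} := ⟨hu, hur.ne⟩
  have hv' : v ∈ s \ {r} := ⟨hv, fun h => hadj (h ▸ hur)⟩
  have : Nonempty V := ⟨r⟩
  obtain ⟨F, hF, hFsep⟩ := exists_isSearchForestOn (s := s \ {r})
      (P := fun C T => u ∈ C → v ∈ C → ¬ (T.isAncestor u v ∨ T.isAncestor v u))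
      fun w hw => by
    have hlt := hn ▸ ncard_compWithin_lt (G := G) hfin hr w
    have hCfin : (compWithin G (s \ {r}) w).Finite := finite_compWithin hfin.sdiff w
    by_cases hC : u ∈ compWithin G (s \ {r}) w ∧ v ∈ compWithin G (s \ {r}) w
    · obtain ⟨T, hT, hsep⟩ :=
        ih _ hlt hCfin (isPreconnectedWithin_compWithin w) hC.1 hC.2 rfl
      exact ⟨T, hT, fun _ _ => hsep⟩
    · obtain ⟨T, hT⟩ := exists_isSearchTreeOn hCfin (isPreconnectedWithin_compWithin w)
        ⟨w, mem_compWithin_self hw⟩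
      exact ⟨T, hT, fun hu hv => absurd ⟨hu, hv⟩ hC⟩
  refine ⟨_, isSearchTreeOn_glueTree hF hr hs, ?_⟩
  rintro (h | h)
  · obtain ⟨hvC, hanc⟩ := isAncestor_of_glueTree_isAncestor hF hu' h
    exact hFsep u hu' (mem_compWithin_self hu') hvC (.inl hanc)
  · obtain ⟨huC, hanc⟩ := isAncestor_of_glueTree_isAncestor hF hv' h
    exact hFsep v hv' huC (mem_compWithin_self hv') (.inr hanc)

end Existence

theorem adj_iff_comparable_in_all_searchTrees_general {V : Type u} [Fintype V]
    (G : SimpleGraph V) (hG : G.Connected) (u v : V) (hne : u ≠ v) :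
    G.Adj u v ↔
      ∀ T : RTree V, IsSearchTree G T → (T.isAncestor u v ∨ T.isAncestor v u) := by
  refine ⟨fun hadj T hT => ?_, fun h => by_contra fun hadj => ?_⟩
  · exact hT.2.isAncestor_or_isAncestor_of_adj hadj (hT.1 ▸ trivial) (hT.1 ▸ trivial)
  · obtain ⟨T, hT, hsep⟩ := exists_isSearchTreeOn_not_comparable (Set.toFinite Set.univ)
      (fun a _ b _ => reachWithin_univ_of_reachable (hG.preconnected a b)) trivial trivial hne hadj
    exact hsep (h T hT)

/-- `u` and `v` are adjacent in `G` iff in every search tree on `G`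
they lie on a common branch (one is an ancestor of the other). -/
theorem adj_iff_comparable_in_all_searchTrees {V : Type u} [Fintype V] [Nonempty V]
    (G : SimpleGraph V) (hG : G.Connected) (u v : V) (hne : u ≠ v) :
    G.Adj u v ↔
      ∀ T : RTree V, IsSearchTree G T → (T.isAncestor u v ∨ T.isAncestor v u) :=
  adj_iff_comparable_in_all_searchTrees_general G hG u v hne
end

section
/- Let G' be a connected graph and x, v vertices of G' with N_{G'}[x] ⊆ N_{G'}[v]. If T' is a search tree on G' in which v is a descendant of x, then x has at most one child in T', and the tree p(T',x) obtained by eliminating x from T' is a search tree on G' − x. -/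
open scoped Classical

universe u

variable {V : Type u}

/-!
A rooted tree is a search tree on `G[S]` exactly when it is a connected treedepth decomposition
of `G[S]`: every subtree induces a connected subgraph and every edge joins an ancestor to a
descendant. Eliminating a vertex `x` that has at most one child keeps the ancestor relation among
the remaining vertices, so only the connectivity of the subtrees containing `x` is at stake. Such a
subtree also contains the descendant `v` of `x`, and since `N[x] ⊆ N[v]` every path through `x`
can be rerouted through `v`.

That `x` has at most one child comes from the same picture: `x` has a neighbour `z` in the subtree
of each of its children, and `z` is `v` or a neighbour of `v`, hence comparable with `v`; this
puts `z` in the subtree of the child above `v`.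
-/

open Relation

namespace RTree

variable {T : RTree V} {a b c w x : V}

lemma parentRel_rightUnique (T : RTree V) : Relator.RightUnique T.parentRel :=
  fun _ _ _ hb hc => Option.some.inj (hb.symm.trans hc)

lemma isAncestor_of_parent (h : T.parent a = some b) : T.isAncestor b a :=
  ReflTransGen.single h

lemma isAncestor_trans (hab : T.isAncestor a b) (hbc : T.isAncestor b c) : T.isAncestor a c :=
  hbc.trans hab

lemma isAncestor_total (hac : T.isAncestor a c) (hbc : T.isAncestor b c) :
    T.isAncestor a b ∨ T.isAncestor b a :=
  (ReflTransGen.total_of_right_unique T.parentRel_rightUnique hac hbc).symm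

lemma eq_or_isAncestor_parent (hc : T.parent c = some b) (h : T.isAncestor a c) :
    a = c ∨ T.isAncestor a b := by
  rcases h.cases_head with h | ⟨m, hcm, hma⟩
  · exact Or.inl h.symm
  · exact Or.inr (T.parentRel_rightUnique hcm hc ▸ hma)

lemma exists_child_isAncestor (h : T.isAncestor a w) (hne : w ≠ a) :
    ∃ c, T.parent c = some a ∧ T.isAncestor c w := by
  rcases h.cases_tail with h | ⟨c, hwc, hca⟩
  · exact absurd h.symm hne
  · exact ⟨c, hca, hwc⟩

lemma descendants_subset_of_isAncestor (h : T.isAncestor b a) :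
    T.descendants a ⊆ T.descendants b :=
  fun _ hw => ⟨hw.1, isAncestor_trans h hw.2⟩

namespace WF

variable (hT : T.WF)
include hT

lemma mem_supp_of_parent (h : T.parent a = some b) : a ∈ T.supp := by
  by_contra ha
  simp [hT.2.2.1 a ha] at h

lemma ne_root_of_parent (h : T.parent a = some b) : a ≠ T.root := by
  rintro rfl
  simp [hT.2.1] at h

lemma parent_mem_supp (h : T.parent a = some b) : b ∈ T.supp := by
  obtain ⟨u, hu, hau⟩ := hT.2.2.2.1 a (hT.mem_supp_of_parent h) (hT.ne_root_of_parent h)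
  rwa [Option.some.inj (h.symm.trans hau)]

lemma mem_supp_of_isAncestor (h : T.isAncestor a w) (hne : w ≠ a) : w ∈ T.supp := by
  rcases h.cases_head with h | ⟨m, hwm, -⟩
  · exact absurd h hne
  · exact hT.mem_supp_of_parent hwm

lemma root_isAncestor (ha : a ∈ T.supp) : T.isAncestor T.root a :=
  hT.2.2.2.2 a ha

lemma descendants_root : T.descendants T.root = T.supp :=
  Set.ext fun _ => ⟨fun h => h.1, fun h => ⟨h, hT.root_isAncestor h⟩⟩

/-- Every forward orbit of `parent` ends at the root, which has no parent. -/
lemma not_transGen_self : ¬ TransGen T.parentRel a a := by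
  intro hcyc
  have ha : a ∈ T.supp := by
    obtain ⟨m, ham, -⟩ := TransGen.head'_iff.mp hcyc
    exact hT.mem_supp_of_parent ham
  have hcycle : ∀ b, ReflTransGen T.parentRel a b → TransGen T.parentRel b b := by
    intro b hab
    induction hab with
    | refl => exact hcyc
    | tail _ hbc ih =>
      obtain ⟨m, hbm, hmb⟩ := TransGen.head'_iff.mp ih
      obtain rfl := T.parentRel_rightUnique hbm hbc
      exact TransGen.tail' hmb hbc
  obtain ⟨m, hm, -⟩ := TransGen.head'_iff.mp (hcycle _ (hT.root_isAncestor ha))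
  simp [RTree.parentRel, hT.2.1] at hm

lemma isAncestor_antisymm (hab : T.isAncestor a b) (hba : T.isAncestor b a) : a = b := by
  rcases hab.cases_head with h | ⟨m, hbm, hma⟩
  · exact h.symm
  · exact absurd (TransGen.head' hbm (hma.trans hba)) hT.not_transGen_self

lemma notMem_descendants_of_parent (hc : T.parent c = some a) : a ∉ T.descendants c :=
  fun h => hT.not_transGen_self (TransGen.tail' h.2 hc)

lemma eq_of_isAncestor_of_parent_eq (ha : T.parent a = some x) (hc : T.parent c = some x)
    (h : T.isAncestor a c) : a = c := by
  rcases eq_or_isAncestor_parent hc h with h | h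
  · exact h
  · exact absurd (TransGen.head' (r := T.parentRel) ha h) hT.not_transGen_self

lemma eq_of_isAncestor_of_isAncestor (ha : T.parent a = some x) (hc : T.parent c = some x)
    (haw : T.isAncestor a w) (hcw : T.isAncestor c w) : a = c := by
  rcases isAncestor_total haw hcw with h | h
  · exact hT.eq_of_isAncestor_of_parent_eq ha hc h
  · exact (hT.eq_of_isAncestor_of_parent_eq hc ha h).symm

end WF

lemma subtreeAt_parent_eq (hw : w ∈ T.descendants c) (hwc : w ≠ c) :
    (T.subtreeAt c).parent w = T.parent w := by
  simp [subtreeAt, hwc, hw]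

lemma subtreeAt_parentRel_le : (T.subtreeAt c).parentRel ≤ T.parentRel := by
  intro p q h
  simp only [parentRel, subtreeAt] at h
  split_ifs at h
  exact h

lemma WF.subtreeAt_isAncestor_iff (hT : T.WF) (ha : a ∈ T.descendants c) :
    (T.subtreeAt c).isAncestor a w ↔ T.isAncestor a w := by
  refine ⟨fun h => ReflTransGen.mono subtreeAt_parentRel_le _ _ h, fun h => ?_⟩
  induction h using ReflTransGen.head_induction_on with
  | refl => exact .refl
  | @head p q hpq hqa ih =>
    have hpc : p ≠ c := by
      rintro rfl
      exact hT.not_transGen_self (TransGen.head' hpq (hqa.trans ha.2))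
    have hpD : p ∈ T.descendants c :=
      ⟨hT.mem_supp_of_parent hpq, (ReflTransGen.head hpq hqa).trans ha.2⟩
    exact ReflTransGen.head ((subtreeAt_parent_eq hpD hpc).trans hpq) ih

lemma WF.subtreeAt_descendants (hT : T.WF) (hw : w ∈ T.descendants c) :
    (T.subtreeAt c).descendants w = T.descendants w := by
  ext z
  constructor
  · rintro ⟨hz, hwz⟩
    exact ⟨hz.1, (hT.subtreeAt_isAncestor_iff hw).1 hwz⟩
  · rintro ⟨hz, hwz⟩
    exact ⟨descendants_subset_of_isAncestor hw.2 ⟨hz, hwz⟩,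
      (hT.subtreeAt_isAncestor_iff hw).2 hwz⟩

lemma WF.subtreeAt (hT : T.WF) (hc : c ∈ T.supp) : (T.subtreeAt c).WF := by
  have hcD : c ∈ T.descendants c := ⟨hc, .refl⟩
  refine ⟨hcD, by simp [RTree.subtreeAt],
    fun w hw => by simp [RTree.subtreeAt, show w ∉ T.descendants c from hw],
    fun w hw hwc => ?_, fun w hw => (hT.subtreeAt_isAncestor_iff hcD).2 hw.2⟩
  rcases hw.2.cases_head with h | ⟨u, hwu, huc⟩
  · exact absurd h hwc
  · exact ⟨u, ⟨hT.parent_mem_supp hwu, huc⟩, (subtreeAt_parent_eq hw hwc).trans hwu⟩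

end RTree

section reachWithin

variable {G : SimpleGraph V} {s t A : Set V} {a b v x : V}

lemma reachWithin_mono (hst : s ⊆ t) (h : reachWithin G s a b) : reachWithin G t a b :=
  ReflTransGen.mono (fun _ _ h => ⟨hst h.1, hst h.2.1, h.2.2⟩) _ _ h

lemma reachWithin_mem_of_closed (hA : ∀ a b, a ∈ A → b ∈ s → G.Adj a b → b ∈ A)
    (h : reachWithin G s a b) (ha : a ∈ A) : b ∈ A := by
  induction h with
  | refl => exact ha
  | tail _ hstep ih => exact hA _ _ ih hstep.2.1 hstep.2.2

/-- Replace every occurrence of `x` on the path by `v`. -/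
lemma reachWithin_diff_singleton (hv : v ∈ s) (hvx : v ≠ x)
    (hN : ∀ z, G.Adj x z → z = v ∨ G.Adj v z) (h : reachWithin G s a b) (ha : a ≠ x)
    (hb : b ≠ x) : reachWithin G (s \ {x}) a b := by
  let f : V → V := fun y => if y = x then v else y
  have hab := ReflTransGen.lift' f (p := fun a b => a ∈ s \ {x} ∧ b ∈ s \ {x} ∧ G.Adj a b)
    ?_ a b h
  · simpa only [reachWithin, Function.onFun, f, ha, hb, if_false] using hab
  rintro p q ⟨hp, hq, hpq⟩
  show reachWithin G (s \ {x}) (f p) (f q)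
  by_cases hpx : p = x
  · have hqx : q ≠ x := (hpx ▸ hpq).ne'
    simp only [f, hpx, hqx, if_true, if_false]
    rcases hN q (hpx ▸ hpq) with rfl | hvq
    · exact .refl
    · exact .single ⟨⟨hv, hvx⟩, ⟨hq, hqx⟩, hvq⟩
  by_cases hqx : q = x
  · simp only [f, hpx, hqx, if_true, if_false]
    rcases hN p (hqx ▸ hpq.symm) with rfl | hvp
    · exact .refl
    · exact .single ⟨⟨hp, hpx⟩, ⟨hv, hvx⟩, hvp.symm⟩
  · simp only [f, hpx, hqx, if_false]
    exact .single ⟨⟨hp, hpx⟩, ⟨hq, hqx⟩, hpq⟩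

end reachWithin

namespace RTree

variable {G : SimpleGraph V} {T : RTree V} {a c w y z : V}

structure IsConnectedTreedepthDecomp (G : SimpleGraph V) (T : RTree V) : Prop where
  wf : T.WF
  reach_descendants : ∀ w ∈ T.supp, ∀ a ∈ T.descendants w, ∀ b ∈ T.descendants w,
    reachWithin G (T.descendants w) a b
  isAncestor_or_of_adj : ∀ a ∈ T.supp, ∀ b ∈ T.supp, G.Adj a b →
    T.isAncestor a b ∨ T.isAncestor b a

namespace IsConnectedTreedepthDecomp

variable (hT : T.IsConnectedTreedepthDecomp G)
include hT

lemma isAncestor_of_adj_mem_descendants (hz : z ∈ T.descendants a) (hy : y ∈ T.supp)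
    (hzy : G.Adj z y) (hya : y ∉ T.descendants a) : T.isAncestor y a := by
  rcases hT.isAncestor_or_of_adj z hz.1 y hy hzy with h | h
  · exact absurd (descendants_subset_of_isAncestor hz.2 ⟨hy, h⟩) hya
  · rcases isAncestor_total h hz.2 with h' | h'
    · exact h'
    · exact absurd ⟨hy, h'⟩ hya

lemma subtreeAt (hc : c ∈ T.supp) : (T.subtreeAt c).IsConnectedTreedepthDecomp G where
  wf := hT.wf.subtreeAt hc
  reach_descendants w hw := by
    rw [hT.wf.subtreeAt_descendants hw]
    exact hT.reach_descendants w hw.1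
  isAncestor_or_of_adj a ha b hb hab := by
    rw [hT.wf.subtreeAt_isAncestor_iff ha, hT.wf.subtreeAt_isAncestor_iff hb]
    exact hT.isAncestor_or_of_adj a ha.1 b hb.1 hab

/-- The subtree of a child of the root is closed under adjacency in `G[S - root]`. -/
lemma mem_descendants_of_reachWithin (hc : T.parent c = some T.root)
    (hw : reachWithin G (T.supp \ {T.root}) c w) : w ∈ T.descendants c := by
  refine reachWithin_mem_of_closed (fun p q hp hq hpq => ?_) hw
    ⟨hT.wf.mem_supp_of_parent hc, .refl⟩
  by_contra hqc
  rcases eq_or_isAncestor_parent hc (hT.isAncestor_of_adj_mem_descendants hp hq.1 hpq hqc)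
    with h | h
  · obtain rfl := h
    exact hqc ⟨hq.1, .refl⟩
  · exact hq.2 (hT.wf.isAncestor_antisymm h (hT.wf.root_isAncestor hq.1))

theorem isSearchTreeRec (hfin : T.supp.Finite) : IsSearchTreeRec G T := by
  induction hn : T.supp.ncard using Nat.strong_induction_on generalizing T with
  | _ n ih =>
  have hroot_notMem : ∀ c, T.parent c = some T.root → T.root ∉ T.descendants c :=
    fun c hc => hT.wf.notMem_descendants_of_parent hc
  refine .intro T hT.wf ?_ (fun c hc w => ⟨fun hw => ?_, fun ⟨_, _, hw⟩ => ?_⟩)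
    (fun c hc => ?_)
  · simpa only [hT.wf.descendants_root] using hT.reach_descendants _ hT.wf.1
  · have hc_supp := hT.wf.mem_supp_of_parent hc
    have hsub : T.descendants c ⊆ T.supp \ {T.root} :=
      fun z hz => ⟨hz.1, fun h => hroot_notMem c hc (Set.mem_singleton_iff.mp h ▸ hz)⟩
    exact ⟨hw.1, fun h => hroot_notMem c hc (h ▸ hw), reachWithin_mono hsub
      (hT.reach_descendants c hc_supp c ⟨hc_supp, .refl⟩ w hw)⟩
  · exact hT.mem_descendants_of_reachWithin hc hw
  · have hsub : (T.subtreeAt c).supp ⊂ T.supp :=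
      (Set.ssubset_iff_of_subset fun _ h => h.1).2 ⟨T.root, hT.wf.1, hroot_notMem c hc⟩
    exact ih _ (hn ▸ Set.ncard_lt_ncard hsub hfin)
      (hT.subtreeAt (hT.wf.mem_supp_of_parent hc)) (hfin.subset hsub.subset) rfl

end IsConnectedTreedepthDecomp

theorem _root_.IsSearchTreeRec.isConnectedTreedepthDecomp (hT : IsSearchTreeRec G T) :
    T.IsConnectedTreedepthDecomp G := by
  induction hT with
  | intro T hwf hconn hcomp _ ih =>
  have hchild : ∀ w ∈ T.supp, w ≠ T.root →
      ∃ c, T.parent c = some T.root ∧ w ∈ T.descendants c := fun w hw hwr => by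
    obtain ⟨c, hc, hcw⟩ := exists_child_isAncestor (hwf.root_isAncestor hw) hwr
    exact ⟨c, hc, hw, hcw⟩
  refine ⟨hwf, fun w hw => ?_, fun a ha b hb hab => ?_⟩
  · by_cases hwr : w = T.root
    · rw [hwr, hwf.descendants_root]
      exact hconn
    · obtain ⟨c, hc, hwc⟩ := hchild w hw hwr
      rw [← hwf.subtreeAt_descendants hwc]
      exact (ih c hc).reach_descendants w hwc
  · by_cases har : a = T.root
    · exact Or.inl (har ▸ hwf.root_isAncestor hb)
    by_cases hbr : b = T.root
    · exact Or.inr (hbr ▸ hwf.root_isAncestor ha)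
    obtain ⟨c, hc, hac⟩ := hchild a ha har
    have hbc : b ∈ T.descendants c := (hcomp c hc b).2
      ⟨hb, hbr, ((hcomp c hc a).1 hac).2.2.tail ⟨⟨ha, har⟩, ⟨hb, hbr⟩, hab⟩⟩
    rw [← hwf.subtreeAt_isAncestor_iff hac, ← hwf.subtreeAt_isAncestor_iff hbc]
    exact (ih c hc).isAncestor_or_of_adj a hac b hbc hab

end RTree

namespace RTree

variable {T : RTree V} {a b c w x : V}

lemma elim_parent_of_parent_ne (ha : a ≠ x) (hax : T.parent a ≠ some x) :
    (T.elim x).parent a = T.parent a := by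
  simp [elim, ha, hax]

lemma elim_parent_of_parent_eq (ha : a ≠ x) (hax : T.parent a = some x) :
    (T.elim x).parent a = T.parent x := by
  simp [elim, ha, hax]

lemma transGen_of_elim_parent (h : (T.elim x).parent a = some b) :
    TransGen T.parentRel a b := by
  simp only [elim] at h
  split_ifs at h with hax hax'
  · exact .head hax' (.single h)
  · exact .single h

lemma isAncestor_of_elim_isAncestor (h : (T.elim x).isAncestor a b) : T.isAncestor a b :=
  reflTransGen_closed (fun _ _ hpq => (transGen_of_elim_parent hpq).to_reflTransGen) _ _ h

lemma elim_isAncestor_of_isAncestor (ha : a ≠ x) (hb : b ≠ x) (h : T.isAncestor a b) :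
    (T.elim x).isAncestor a b := by
  -- a chain from `b` that reaches `x` is continued past `x` from the last vertex before it
  suffices key : ∀ d, ReflTransGen T.parentRel b d →
      (d ≠ x → ReflTransGen (T.elim x).parentRel b d) ∧
      (d = x → ∃ m ≠ x, ReflTransGen (T.elim x).parentRel b m ∧ T.parent m = some x) from
    (key a h).1 ha
  intro d hbd
  induction hbd with
  | refl => exact ⟨fun _ => .refl, fun h => absurd h hb⟩
  | @tail m d _ hmd ih =>
    by_cases hmx : m = x
    · obtain ⟨m', hm'x, hbm', hm'⟩ := ih.2 hmx
      refine ⟨fun _ => hbm'.tail ?_, fun _ => ⟨m', hm'x, hbm', hm'⟩⟩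
      rw [parentRel, elim_parent_of_parent_eq hm'x hm', ← hmx]
      exact hmd
    · refine ⟨fun hdx => (ih.1 hmx).tail ?_, fun hdx => ⟨m, hmx, ih.1 hmx, hdx ▸ hmd⟩⟩
      have hmx' : T.parent m ≠ some x := fun h => hdx (Option.some.inj (hmd.symm.trans h))
      rw [parentRel, elim_parent_of_parent_ne hmx hmx']
      exact hmd

lemma elim_isAncestor_iff (ha : a ≠ x) (hb : b ≠ x) :
    (T.elim x).isAncestor a b ↔ T.isAncestor a b :=
  ⟨isAncestor_of_elim_isAncestor, elim_isAncestor_of_isAncestor ha hb⟩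

lemma elim_descendants (hw : w ≠ x) : (T.elim x).descendants w = T.descendants w \ {x} := by
  ext z
  constructor
  · rintro ⟨⟨hz, hzx⟩, hwz⟩
    exact ⟨⟨hz, (elim_isAncestor_iff hw hzx).1 hwz⟩, hzx⟩
  · rintro ⟨⟨hz, hwz⟩, hzx⟩
    exact ⟨⟨hz, hzx⟩, (elim_isAncestor_iff hw hzx).2 hwz⟩

lemma elim_root_of_root_ne (hr : T.root ≠ x) : (T.elim x).root = T.root := by
  simp [elim, hr]

lemma elim_root_of_root_eq (hr : T.root = x) (hc : T.parent c = some x)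
    (huniq : ∀ a b, T.parent a = some x → T.parent b = some x → a = b) :
    (T.elim x).root = c := by
  have hex : ∃ w, T.parent w = some x := ⟨c, hc⟩
  simp only [elim, if_pos hr, dif_pos hex]
  exact huniq _ _ hex.choose_spec hc

lemma WF.exists_child_of_root_eq (hT : T.WF) (hr : T.root = x)
    (hne : (T.supp \ {x}).Nonempty) : ∃ c, T.parent c = some x := by
  obtain ⟨w, hw, hwx⟩ := hne
  obtain ⟨c, hc, -⟩ := exists_child_isAncestor (hr ▸ hT.root_isAncestor hw) hwx
  exact ⟨c, hc⟩

lemma WF.elim_root_isAncestor (hT : T.WF)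
    (huniq : ∀ a b, T.parent a = some x → T.parent b = some x → a = b)
    (hne : (T.supp \ {x}).Nonempty) :
    (T.elim x).root ∈ T.supp \ {x} ∧
      ∀ w ∈ T.supp \ {x}, T.isAncestor (T.elim x).root w := by
  by_cases hr : T.root = x
  · obtain ⟨c, hc⟩ := hT.exists_child_of_root_eq hr hne
    rw [elim_root_of_root_eq hr hc huniq]
    refine ⟨⟨hT.mem_supp_of_parent hc, hr ▸ hT.ne_root_of_parent hc⟩,
      fun w ⟨hw, hwx⟩ => ?_⟩
    obtain ⟨c', hc', hc'w⟩ := exists_child_isAncestor (hr ▸ hT.root_isAncestor hw) hwx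
    exact huniq c' c hc' hc ▸ hc'w
  · rw [elim_root_of_root_ne hr]
    exact ⟨⟨hT.1, hr⟩, fun w hw => hT.root_isAncestor hw.1⟩

lemma WF.elim (hT : T.WF) (huniq : ∀ a b, T.parent a = some x → T.parent b = some x → a = b)
    (hne : (T.supp \ {x}).Nonempty) : (T.elim x).WF := by
  obtain ⟨hroot, hroot_anc⟩ := hT.elim_root_isAncestor huniq hne
  have hparent_root : T.parent T.root ≠ some x := by simp [hT.2.1]
  refine ⟨hroot, ?_, fun w hw => ?_, fun w hw hwr => ?_,
    fun w hw => (elim_isAncestor_iff hroot.2 hw.2).2 (hroot_anc w hw)⟩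
  · by_cases hr : T.root = x
    · obtain ⟨c, hc⟩ := hT.exists_child_of_root_eq hr hne
      rw [elim_root_of_root_eq hr hc huniq,
        elim_parent_of_parent_eq (hr ▸ hT.ne_root_of_parent hc) hc, ← hr, hT.2.1]
    · rw [elim_root_of_root_ne hr, elim_parent_of_parent_ne hr hparent_root, hT.2.1]
  · by_cases hwx : w = x
    · simp [RTree.elim, hwx]
    · have hw' : w ∉ T.supp := fun h => hw ⟨h, hwx⟩
      simp [RTree.elim, hwx, hT.2.2.1 w hw']
  · by_cases hwx' : T.parent w = some x
    · have hxr : x ≠ T.root := by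
        rintro rfl
        exact hwr (elim_root_of_root_eq rfl hwx' huniq).symm
      obtain ⟨u, hu, hxu⟩ := hT.2.2.2.1 x (hT.parent_mem_supp hwx') hxr
      have hux : u ≠ x := by
        rintro rfl
        exact hT.not_transGen_self (.single hxu)
      exact ⟨u, ⟨hu, hux⟩, (elim_parent_of_parent_eq hw.2 hwx').trans hxu⟩
    · have hwr' : w ≠ T.root := by
        rintro rfl
        exact hwr (elim_root_of_root_ne hw.2).symm
      obtain ⟨u, hu, hwu⟩ := hT.2.2.2.1 w hw.1 hwr'
      exact ⟨u, ⟨hu, fun h => hwx' (hwu.trans (congrArg some h))⟩,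
        (elim_parent_of_parent_ne hw.2 hwx').trans hwu⟩

end RTree

namespace RTree.IsConnectedTreedepthDecomp

variable {G : SimpleGraph V} {T : RTree V} {a b c v x : V}
variable (hT : T.IsConnectedTreedepthDecomp G) (hxv : x ≠ v)
  (hN : ∀ z, G.Adj x z → z = v ∨ G.Adj v z) (hv : T.isAncestor x v)
include hT hxv hN hv

lemma eq_child_of_parent_eq (hc : T.parent c = some x) (hcv : T.isAncestor c v)
    (ha : T.parent a = some x) : a = c := by
  have hx : x ∈ T.supp := hT.wf.parent_mem_supp ha
  have haD : a ∈ T.descendants a := ⟨hT.wf.mem_supp_of_parent ha, .refl⟩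
  -- `G[T|x]` is connected, and the only vertex of `T|x` outside `T|a` adjacent to `T|a` is `x`
  obtain ⟨z, hz, hxz⟩ : ∃ z ∈ T.descendants a, G.Adj x z := by
    by_contra! hnone
    have hreach := hT.reach_descendants x hx a
      (descendants_subset_of_isAncestor (isAncestor_of_parent ha) haD) x ⟨hx, .refl⟩
    refine hT.wf.notMem_descendants_of_parent ha
      (reachWithin_mem_of_closed (fun p q hp hq hpq => ?_) hreach haD)
    by_contra hqa
    rcases eq_or_isAncestor_parent ha (hT.isAncestor_of_adj_mem_descendants hp hq.1 hpq hqa)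
      with h | h
    · obtain rfl := h
      exact hqa haD
    · obtain rfl := hT.wf.isAncestor_antisymm h hq.2
      exact hnone p hp hpq.symm
  have hv_supp : v ∈ T.supp := hT.wf.mem_supp_of_isAncestor hv hxv.symm
  obtain ⟨w, haw, hcw⟩ : ∃ w, T.isAncestor a w ∧ T.isAncestor c w := by
    rcases hN z hxz with rfl | hvz
    · exact ⟨z, hz.2, hcv⟩
    · rcases hT.isAncestor_or_of_adj v hv_supp z hz.1 hvz with h | h
      · exact ⟨z, hz.2, isAncestor_trans hcv h⟩
      · exact ⟨v, isAncestor_trans hz.2 h, hcv⟩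
  exact hT.wf.eq_of_isAncestor_of_isAncestor ha hc haw hcw

lemma eq_of_parent_eq (ha : T.parent a = some x) (hb : T.parent b = some x) : a = b := by
  obtain ⟨c, hc, hcv⟩ := exists_child_isAncestor hv hxv.symm
  exact (hT.eq_child_of_parent_eq hxv hN hv hc hcv ha).trans
    (hT.eq_child_of_parent_eq hxv hN hv hc hcv hb).symm

lemma elim : (T.elim x).IsConnectedTreedepthDecomp G := by
  have hv_supp : v ∈ T.supp := hT.wf.mem_supp_of_isAncestor hv hxv.symm
  refine ⟨hT.wf.elim (fun a b => hT.eq_of_parent_eq hxv hN hv) ⟨v, hv_supp, hxv.symm⟩,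
    fun w ⟨hw, hwx⟩ => ?_, fun a ⟨ha, hax⟩ b ⟨hb, hbx⟩ hab => ?_⟩
  · rw [elim_descendants hwx]
    rintro a ⟨ha, hax⟩ b ⟨hb, hbx⟩
    have hreach := hT.reach_descendants w hw a ha b hb
    by_cases hxw : x ∈ T.descendants w
    · exact reachWithin_diff_singleton
        (descendants_subset_of_isAncestor hxw.2 ⟨hv_supp, hv⟩) hxv.symm hN hreach hax hbx
    · rwa [Set.sdiff_singleton_eq_self hxw]
  · rw [elim_isAncestor_iff hax hbx, elim_isAncestor_iff hbx hax]
    exact hT.isAncestor_or_of_adj a ha b hb hab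

end RTree.IsConnectedTreedepthDecomp

theorem elim_isSearchTree_general {V : Type u} [Fintype V] (G' : SimpleGraph V)
    (x v : V) (hxv : x ≠ v)
    (hN : ∀ z : V, (z = x ∨ G'.Adj x z) → (z = v ∨ G'.Adj v z))
    (T' : RTree V) (hT' : IsSearchTree G' T') (hdesc : T'.isAncestor x v) :
    (∀ a b, T'.parent a = some x → T'.parent b = some x → a = b)
    ∧ IsSearchTreeOn G' {x}ᶜ (T'.elim x) := by
  obtain ⟨hsupp, hrec⟩ := hT'
  have hT := hrec.isConnectedTreedepthDecomp
  have hN' : ∀ z, G'.Adj x z → z = v ∨ G'.Adj v z := fun z hz => hN z (Or.inr hz)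
  refine ⟨fun a b => hT.eq_of_parent_eq hxv hN' hdesc, ?_,
    (hT.elim hxv hN' hdesc).isSearchTreeRec (Set.toFinite _)⟩
  show T'.supp \ {x} = {x}ᶜ
  rw [hsupp, Set.compl_eq_univ_sdiff]

/-- if `N[x] ⊆ N[v]` and `v` is a descendant of `x` in a search tree `T'`
on `G'`, then `x` has at most one child in `T'` and `p(T',x)` is a search tree on `G' − x`. -/
theorem elim_isSearchTree {V : Type u} [Fintype V] (G' : SimpleGraph V) (hG' : G'.Connected)
    (x v : V) (hxv : x ≠ v)
    (hN : ∀ z : V, (z = x ∨ G'.Adj x z) → (z = v ∨ G'.Adj v z))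
    (T' : RTree V) (hT' : IsSearchTree G' T') (hdesc : T'.isAncestor x v) :
    (∀ a b, T'.parent a = some x → T'.parent b = some x → a = b)
    ∧ IsSearchTreeOn G' {x}ᶜ (T'.elim x) :=
  elim_isSearchTree_general G' x v hxv hN T' hT' hdesc
end
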